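/- If x = (x_2, ..., x_n) and y = (y_2, ..., y_n) are integer vectors with 0 ≤ x_ℓ ≤ ℓ-1 and 0 ≤ y_ℓ ≤ ℓ-1 for all 2 ≤ ℓ ≤ n, and x_ℓ ≤ y_ℓ for all ℓ, then ω(x) ≤ ω(y) in Bruhat order on S_n. -/

import Mathlib

/-!
Each `ω(x)` is given by a reduced word: its number of inversions is `∑ x_ℓ`, since every new
letter `s_i` of `u_ℓ(x)` swaps two adjacent positions whose values are still in increasing order
(the prefix `u_2 ⋯ u_{ℓ-1}` fixes all letters `≥ ℓ`). Raising a single coordinate `x_ℓ` by one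
inserts one simple reflection into the middle of that word, i.e. multiplies `ω(x)` on the right
by a conjugate of `s_i`, which is again a transposition; as the length grows by one, this is a
Bruhat step. Raising the coordinates of `x` one unit at a time until they reach `y` gives a chain
of such steps.
-/

open Equiv Finset

/-- The simple transposition `s_i = (i, i+1)` (1-indexed letters), as a
permutation of `Fin n` (0-indexed letters `i-1`, `i`). -/
def sT (n : ℕ) [NeZero n] (i : ℕ) : Equiv.Perm (Fin n) :=
  Equiv.swap (Fin.ofNat n (i - 1 : ℕ)) (Fin.ofNat n (i : ℕ))

/-- The Bruhat length of a permutation: its number of inversions. -/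
def lenP (n : ℕ) (w : Equiv.Perm (Fin n)) : ℕ :=
  (Finset.univ.filter (fun p : Fin n × Fin n => p.1 < p.2 ∧ w p.2 < w p.1)).card

/-- Bruhat order on `S_n`: the reflexive-transitive closure of
"multiply on the right by a transposition and increase length". -/
def bruhatLE (n : ℕ) (u w : Equiv.Perm (Fin n)) : Prop :=
  Relation.ReflTransGen
    (fun a b => (∃ i j : Fin n, i ≠ j ∧ b = a * Equiv.swap i j) ∧ lenP n a < lenP n b) u w

/-- `u_ℓ(x) = s_{ℓ-1} s_{ℓ-2} ⋯ s_{ℓ-x_ℓ}` (identity if `x_ℓ = 0`). -/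
def uPerm (n : ℕ) [NeZero n] (ℓ m : ℕ) : Equiv.Perm (Fin n) :=
  ((List.range m).map (fun t => sT n (ℓ - 1 - t))).prod

/-- `ω(x) = u_2(x) u_3(x) ⋯ u_n(x)`. -/
def omegaPerm (n : ℕ) [NeZero n] (x : ℕ → ℕ) : Equiv.Perm (Fin n) :=
  ((List.range (n - 1)).map (fun k => uPerm n (k + 2) (x (k + 2)))).prod

open Function

section Inversions

variable {n : ℕ}

def inversions (w : Perm (Fin n)) : Finset (Fin n × Fin n) :=
  univ.filter fun p => p.1 < p.2 ∧ w p.2 < w p.1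

lemma swap_apply_lt_swap_apply_of_succ_eq {a b p q : Fin n} (hab : (a : ℕ) + 1 = b)
    (hpq : p < q) (hne : ¬(p = a ∧ q = b)) : swap a b p < swap a b q := by
  rw [Fin.lt_def] at hpq ⊢
  simp only [Fin.ext_iff] at hne
  simp only [swap_apply_def]
  split_ifs <;> simp only [Fin.ext_iff] at * <;> omega

lemma lenP_mul_swap_of_succ_eq {w : Perm (Fin n)} {a b : Fin n} (hab : (a : ℕ) + 1 = b)
    (h : w a < w b) : lenP n (w * swap a b) = lenP n w + 1 := by
  set e := (swap a b).prodCongr (swap a b)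
  have hab' : a < b := by rw [Fin.lt_def]; omega
  have hinv : inversions (w * swap a b) = insert (a, b) ((inversions w).map e.toEmbedding) := by
    ext ⟨p, q⟩
    rw [inversions, mem_filter]
    simp only [inversions, mem_filter, mem_univ, true_and, mem_insert, Prod.mk.injEq,
      mem_map_equiv, e, prodCongr_symm, symm_swap, prodCongr_apply, Prod.map, Perm.mul_apply]
    constructor
    · rintro ⟨hpq, hw⟩
      by_cases hpqab : p = a ∧ q = b
      · exact .inl hpqab
      · exact .inr ⟨swap_apply_lt_swap_apply_of_succ_eq hab hpq hpqab, hw⟩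
    · rintro (⟨rfl, rfl⟩ | ⟨hpq, hw⟩)
      · simpa using ⟨hab', h⟩
      · refine ⟨?_, hw⟩
        have hne : ¬(swap a b p = a ∧ swap a b q = b) := by
          rintro ⟨hp, hq⟩
          rw [hp, hq] at hw
          exact lt_asymm h hw
        simpa using swap_apply_lt_swap_apply_of_succ_eq hab hpq hne
  have hnotMem : (a, b) ∉ (inversions w).map e.toEmbedding := by
    simpa [e, inversions] using fun hba => (lt_asymm hab' hba).elim
  change #(inversions _) = #(inversions w) + 1
  rw [hinv, card_insert_of_notMem hnotMem, card_map]

lemma lenP_one : lenP n 1 = 0 := by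
  rw [lenP, card_eq_zero, filter_eq_empty_iff]
  exact fun p _ h => lt_asymm h.1 h.2

end Inversions

lemma exists_prod_map_range_eq_mul_conj {G : Type*} [Group G] {f g : ℕ → G} {k₀ : ℕ} (s : G)
    (hk₀ : g k₀ = f k₀ * s) (hg : ∀ k ≠ k₀, g k = f k) {N : ℕ} (hN : k₀ < N) :
    ∃ c : G, ((List.range N).map g).prod = ((List.range N).map f).prod * (c⁻¹ * s * c) := by
  induction N, hN using Nat.le_induction with
  | base =>
    have hpre : (List.range k₀).map g = (List.range k₀).map f :=
      List.map_congr_left fun k hk => hg k (List.mem_range.mp hk).ne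
    refine ⟨1, ?_⟩
    rw [List.prod_range_succ, List.prod_range_succ, hpre, hk₀]
    group
  | succ N hN ih =>
    obtain ⟨c, hc⟩ := ih
    refine ⟨c * f N, ?_⟩
    rw [List.prod_range_succ, List.prod_range_succ, hc, hg N (by omega)]
    group

lemma update_succ_le_of_le {n : ℕ} {x b : ℕ → ℕ} (hxb : ∀ ℓ, 2 ≤ ℓ → ℓ ≤ n → x ℓ ≤ b ℓ) {i : ℕ}
    (hi : x i < b i) : ∀ ℓ, 2 ≤ ℓ → ℓ ≤ n → update x i (x i + 1) ℓ ≤ b ℓ := by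
  intro ℓ h2 hn
  rcases eq_or_ne ℓ i with rfl | hne
  · simpa using hi
  · simpa [hne] using hxb ℓ h2 hn

lemma Fin.val_ofNat_of_lt {n i : ℕ} [NeZero n] (hi : i < n) : (Fin.ofNat n i : ℕ) = i := by
  rw [Fin.val_ofNat, Nat.mod_eq_of_lt hi]

lemma Equiv.Perm.val_apply_lt_of_forall_fixed {n c : ℕ} {w : Perm (Fin n)}
    (hw : ∀ v : Fin n, c ≤ v → w v = v) {v : Fin n} (hv : (v : ℕ) < c) : (w v : ℕ) < c := by
  by_contra! hc
  have := w.injective (hw (w v) hc)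
  omega

section Omega

variable {n : ℕ} [NeZero n]

lemma sT_apply_of_lt {i : ℕ} {v : Fin n} (hv : i < v) : sT n i v = v := by
  have hi : i < n := hv.trans v.isLt
  refine swap_apply_of_ne_of_ne ?_ ?_ <;>
    rw [ne_eq, Fin.ext_iff, Fin.val_ofNat_of_lt (by omega)] <;> omega

lemma sT_apply_sub_one (i : ℕ) : sT n i (Fin.ofNat n (i - 1)) = Fin.ofNat n i :=
  swap_apply_left _ _

lemma uPerm_succ (ℓ m : ℕ) : uPerm n ℓ (m + 1) = uPerm n ℓ m * sT n (ℓ - 1 - m) :=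
  List.prod_range_succ _ m

lemma uPerm_apply_of_lt {ℓ m : ℕ} {v : Fin n} (hv : ℓ - 1 < v) : uPerm n ℓ m v = v := by
  have : uPerm n ℓ m ∈ MulAction.stabilizer (Perm (Fin n)) v := by
    refine list_prod_mem fun σ hσ => ?_
    obtain ⟨t, -, rfl⟩ := List.mem_map.mp hσ
    exact sT_apply_of_lt (by omega)
  exact this

lemma uPerm_apply_ofNat_sub (ℓ m : ℕ) :
    uPerm n ℓ m (Fin.ofNat n (ℓ - 1 - m)) = Fin.ofNat n (ℓ - 1) := by
  induction m with
  | zero => rfl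
  | succ m ih => rw [uPerm_succ, Perm.mul_apply, ← Nat.sub_sub, sT_apply_sub_one, ih]

/-- The partial product `u_2(z) ⋯ u_{j+1}(z)`, so that `omegaPerm n z = omegaPrefix n z (n - 1)`. -/
def omegaPrefix (n : ℕ) [NeZero n] (z : ℕ → ℕ) (j : ℕ) : Perm (Fin n) :=
  ((List.range j).map fun k => uPerm n (k + 2) (z (k + 2))).prod

lemma omegaPrefix_succ (z : ℕ → ℕ) (j : ℕ) :
    omegaPrefix n z (j + 1) = omegaPrefix n z j * uPerm n (j + 2) (z (j + 2)) :=
  List.prod_range_succ _ j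

lemma omegaPrefix_apply_of_lt (z : ℕ → ℕ) {j : ℕ} {v : Fin n} (hv : j < v) :
    omegaPrefix n z j v = v := by
  have : omegaPrefix n z j ∈ MulAction.stabilizer (Perm (Fin n)) v := by
    refine list_prod_mem fun σ hσ => ?_
    obtain ⟨k, hk, rfl⟩ := List.mem_map.mp hσ
    exact uPerm_apply_of_lt (by rw [List.mem_range] at hk; omega)
  exact this

lemma lenP_omegaPrefix_mul_uPerm (z : ℕ → ℕ) {j m : ℕ} (hj : j + 2 ≤ n) (hm : m ≤ j + 1) :
    lenP n (omegaPrefix n z j * uPerm n (j + 2) m) = lenP n (omegaPrefix n z j) + m := by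
  induction m with
  | zero => rfl
  | succ m ih =>
    set w := omegaPrefix n z j * uPerm n (j + 2) m
    set a := Fin.ofNat n (j - m)
    set b := Fin.ofNat n (j + 1 - m)
    have hab : (a : ℕ) + 1 = b := by
      simp only [a, b, Fin.val_ofNat_of_lt (show j - m < n by omega),
        Fin.val_ofNat_of_lt (show j + 1 - m < n by omega)]
      omega
    have hs : sT n (j + 2 - 1 - m) = swap a b := by
      rw [sT, show j + 2 - 1 - m - 1 = j - m by omega, show j + 2 - 1 - m = j + 1 - m by omega]
    have hw : ∀ v : Fin n, j + 2 ≤ v → w v = v := fun v hv => by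
      rw [Perm.mul_apply, uPerm_apply_of_lt (by omega), omegaPrefix_apply_of_lt z (by omega)]
    have hwb : w b = Fin.ofNat n (j + 1) := by
      show omegaPrefix n z j (uPerm n (j + 2) m (Fin.ofNat n (j + 2 - 1 - m))) = _
      rw [uPerm_apply_ofNat_sub, omegaPrefix_apply_of_lt z]
      · rfl
      · rw [Fin.val_ofNat_of_lt (by omega)]
        omega
    have hwa : w a < w b := by
      have hlt := Equiv.Perm.val_apply_lt_of_forall_fixed hw (v := a)
        (by rw [Fin.val_ofNat_of_lt] <;> omega)
      have hne : (w a : ℕ) ≠ j + 1 := by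
        rw [← Fin.val_ofNat_of_lt (show j + 1 < n by omega), ← hwb]
        exact Fin.val_injective.ne (w.injective.ne (by rw [ne_eq, Fin.ext_iff]; omega))
      rw [Fin.lt_def, hwb, Fin.val_ofNat_of_lt (by omega)]
      omega
    rw [uPerm_succ, ← mul_assoc, hs, lenP_mul_swap_of_succ_eq hab hwa, ih (by omega)]
    rfl

lemma lenP_omegaPrefix {z : ℕ → ℕ} (hz : ∀ ℓ, 2 ≤ ℓ → ℓ ≤ n → z ℓ ≤ ℓ - 1) {j : ℕ}
    (hj : j + 1 ≤ n) : lenP n (omegaPrefix n z j) = ∑ k ∈ range j, z (k + 2) := by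
  induction j with
  | zero => exact lenP_one
  | succ j ih =>
    rw [omegaPrefix_succ, lenP_omegaPrefix_mul_uPerm z (by omega) (hz _ (by omega) (by omega)),
      ih (by omega), sum_range_succ]

lemma lenP_omegaPerm {z : ℕ → ℕ} (hz : ∀ ℓ, 2 ≤ ℓ → ℓ ≤ n → z ℓ ≤ ℓ - 1) :
    lenP n (omegaPerm n z) = ∑ k ∈ range (n - 1), z (k + 2) :=
  lenP_omegaPrefix hz (by have := NeZero.pos n; omega)

lemma omegaPerm_congr {x y : ℕ → ℕ} (h : ∀ k < n - 1, x (k + 2) = y (k + 2)) :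
    omegaPerm n x = omegaPerm n y :=
  congrArg List.prod <| List.map_congr_left fun k hk => by rw [h k (List.mem_range.mp hk)]

lemma exists_omegaPerm_update_succ_eq_mul_swap (x : ℕ → ℕ) {k : ℕ} (hk : k < n - 1)
    (hxk : x (k + 2) ≤ k) : ∃ i j : Fin n, i ≠ j ∧
      omegaPerm n (update x (k + 2) (x (k + 2) + 1)) = omegaPerm n x * swap i j := by
  set m := x (k + 2)
  obtain ⟨c, hc⟩ := exists_prod_map_range_eq_mul_conj
    (f := fun k => uPerm n (k + 2) (x (k + 2)))
    (g := fun k' => uPerm n (k' + 2) (update x (k + 2) (m + 1) (k' + 2)))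
    (sT n (k + 1 - m)) (by simp [uPerm_succ, m]) (fun k' hk' => by simp [hk']) hk
  refine ⟨c⁻¹ (Fin.ofNat n (k - m)), c⁻¹ (Fin.ofNat n (k + 1 - m)), c⁻¹.injective.ne ?_, ?_⟩
  · rw [ne_eq, Fin.ext_iff, Fin.val_ofNat_of_lt, Fin.val_ofNat_of_lt] <;> omega
  · have hs : sT n (k + 1 - m) = Equiv.swap (Fin.ofNat n (k - m)) (Fin.ofNat n (k + 1 - m)) := by
      rw [sT, show k + 1 - m - 1 = k - m by omega]
    rw [swap_apply_apply, inv_inv, ← hs]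
    exact hc

lemma bruhatLE_omegaPerm_update_succ {x : ℕ → ℕ} (hx : ∀ ℓ, 2 ≤ ℓ → ℓ ≤ n → x ℓ ≤ ℓ - 1)
    {k : ℕ} (hk : k < n - 1) (hxk : x (k + 2) ≤ k) :
    bruhatLE n (omegaPerm n x) (omegaPerm n (update x (k + 2) (x (k + 2) + 1))) := by
  refine .single ⟨exists_omegaPerm_update_succ_eq_mul_swap x hk hxk, ?_⟩
  rw [lenP_omegaPerm hx, lenP_omegaPerm (update_succ_le_of_le hx (i := k + 2) (by omega))]
  exact sum_lt_sum (fun j _ => le_update_self_iff.mpr (Nat.le_succ _) _)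
    ⟨k, mem_range.mpr hk, by simp⟩

end Omega

/-- If `x_ℓ ≤ y_ℓ` for all `2 ≤ ℓ ≤ n` then `ω(x) ≤ ω(y)` in Bruhat order. -/
theorem stmt3 (n : ℕ) [NeZero n] (x y : ℕ → ℕ)
    (hx : ∀ ℓ, 2 ≤ ℓ → ℓ ≤ n → x ℓ ≤ ℓ - 1)
    (hy : ∀ ℓ, 2 ≤ ℓ → ℓ ≤ n → y ℓ ≤ ℓ - 1)
    (hxy : ∀ ℓ, 2 ≤ ℓ → ℓ ≤ n → x ℓ ≤ y ℓ) :
    bruhatLE n (omegaPerm n x) (omegaPerm n y) := by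
  induction hd : ∑ k ∈ range (n - 1), (y (k + 2) - x (k + 2)) using Nat.strong_induction_on
    generalizing x with
  | _ d ih =>
  by_cases hxy_eq : ∀ k < n - 1, x (k + 2) = y (k + 2)
  · rw [omegaPerm_congr hxy_eq]
    exact .refl
  push Not at hxy_eq
  obtain ⟨k, hk, hne⟩ := hxy_eq
  have hlt : x (k + 2) < y (k + 2) := (hxy _ (by omega) (by omega)).lt_of_ne hne
  have hyk := hy (k + 2) (by omega) (by omega)
  refine (bruhatLE_omegaPerm_update_succ hx hk (by omega)).trans
    (ih _ ?_ _ (update_succ_le_of_le hx (i := k + 2) (by omega)) (update_succ_le_of_le hxy hlt) rfl)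
  rw [← hd]
  refine sum_lt_sum (fun j _ => Nat.sub_le_sub_left (le_update_self_iff.mpr (Nat.le_succ _) _) _)
    ⟨k, mem_range.mpr hk, ?_⟩
  simp only [update_self]
  omega
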